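/- arXiv:2212.12455 — 6 statements merged into one kernel-verified Lean document; each statement's English description precedes it below -/
import Mathlib

section
/- Let X be a nonempty multiset over ℕ × ℕ such that any two elements of X have the same second component (i.e., whenever (p,q) and (p',q') both occur in X, q = q'). Then avgrate(X) = Σ₁X / Σ₂X in ℚ. Hence avgrate is conditionally represented by h(x₁,x₂) = x₁/x₂ subject to the predicate Ψ_rate(X) := 'any two elements of X have equal second components'. -/
/-- The average rate of a multiset of pairs of naturals: the average, counted with
multiplicity, of the fractions `p / q` (with the convention `a / 0 = 0` in `ℚ`). -/
noncomputable def avgrate (X : Multiset (ℕ × ℕ)) : ℚ :=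
  (X.map (fun pq => (pq.1 : ℚ) / (pq.2 : ℚ))).sum / (X.card : ℚ)

/-- If `X` is a nonempty multiset over `ℕ × ℕ` in which any two elements have the same
second component, then `avgrate X = Σ₁X / Σ₂X`. -/
theorem stmt_0 (X : Multiset (ℕ × ℕ)) (hne : X ≠ 0)
    (hΨ : ∀ a ∈ X, ∀ b ∈ X, a.2 = b.2) :
    avgrate X =
      (((X.map Prod.fst).sum : ℕ) : ℚ) / (((X.map Prod.snd).sum : ℕ) : ℚ) := by
  obtain ⟨a, ha⟩ := Multiset.exists_mem_of_ne_zero hne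
  set q : ℕ := a.2 with hq
  have hsnd : ∀ b ∈ X, b.2 = q := fun b hb => hΨ b hb a ha
  have h1 : (X.map (fun pq => (pq.1 : ℚ) / (pq.2 : ℚ))).sum
      = (((X.map Prod.fst).sum : ℕ) : ℚ) / (q : ℚ) := by
    rw [Multiset.map_congr rfl (fun b hb => by rw [hsnd b hb])]
    rw [show (fun pq : ℕ × ℕ => (pq.1 : ℚ) / (q : ℚ))
        = fun pq : ℕ × ℕ => (pq.1 : ℚ) * ((q : ℚ))⁻¹ from funext fun _ => div_eq_mul_inv _ _]
    rw [Multiset.sum_map_mul_right]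
    push_cast
    rw [Multiset.map_map]
    rfl
  have h2 : ((X.map Prod.snd).sum : ℕ) = X.card * q := by
    rw [Multiset.map_congr rfl (fun b hb => hsnd b hb)]
    simp [Multiset.map_const', Multiset.sum_replicate, mul_comm]
  rw [avgrate, h1, h2, div_div]
  push_cast
  ring_nf
end

section
/- Let M be a finite labeled transition system with states Q, labels S, initial states Q₀ and transition relation Δ, let Acc ⊆ Q be a set of accepting states, and let D and A be the predecessor and accepting matrices. Then for every n ≥ 0 and every state q' ∈ Q, α_{n+1}(q') = Σ_{q∈Q} D_{q'q}·α_n(q) + Σ_{q∈Q} A_{q'q}·β_n(q); equivalently, the vector (α_{n+1}(q))_q equals D applied to (α_n(q))_q plus A applied to (β_n(q))_q over ℕ. -/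
open scoped Classical

/-- A finite labeled transition system: a set of initial states and a transition relation. -/
structure LTS (Q S : Type*) where
  init : Set Q
  trans : Set (Q × S × Q)

variable {Q S : Type*} [Fintype Q] [Fintype S]

/-- The finite set of paths of length `n` of an LTS: pairs of a state sequence of length
`n+1` starting in an initial state and a word of length `n` driving the transitions. -/
noncomputable def pathFinset (M : LTS Q S) (n : ℕ) :
    Finset ((Fin (n + 1) → Q) × (Fin n → S)) :=
  Finset.univ.filter (fun p =>
    p.1 0 ∈ M.init ∧ ∀ i : Fin n, (p.1 i.castSucc, p.2 i, p.1 i.succ) ∈ M.trans)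

/-- `beta M n q` is the number of paths of length `n` of `M` ending in state `q`. -/
noncomputable def beta (M : LTS Q S) (n : ℕ) (q : Q) : ℕ :=
  ((pathFinset M n).filter (fun p => p.1 (Fin.last n) = q)).card

/-- `alpha M Acc n q` is the total number of visits to accepting states (from `Acc`)
summed over all paths of length `n` of `M` ending in state `q`. -/
noncomputable def alpha (M : LTS Q S) (Acc : Set Q) (n : ℕ) (q : Q) : ℕ :=
  ∑ p ∈ (pathFinset M n).filter (fun p => p.1 (Fin.last n) = q),
    (Finset.univ.filter (fun i : Fin (n + 1) => p.1 i ∈ Acc)).card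

/-- The predecessor matrix: `predMatrix M i j` is the number of labels `a` with a
transition `(j, a, i)`. -/
noncomputable def predMatrix (M : LTS Q S) : Matrix Q Q ℕ :=
  fun i j => (Finset.univ.filter (fun a : S => (j, a, i) ∈ M.trans)).card

/-- The accepting matrix: agrees with the predecessor matrix on rows indexed by accepting
states and is zero elsewhere. -/
noncomputable def accMatrix (M : LTS Q S) (Acc : Set Q) : Matrix Q Q ℕ :=
  fun i j => if i ∈ Acc then predMatrix M i j else 0

/-!
A path of length `n + 1` ending in `q'` is a path of length `n`, ending in some state `q`,
followed by one of the `D q' q` labelled transitions from `q` to `q'`. It visits accepting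
states as often as the shorter path, plus once more if `q' ∈ Acc`. Summing over all such
extensions, the first part contributes `D α_n` and the extra visit contributes `A β_n`.
-/

open Finset

theorem Fin.card_filter_univ_snoc {α : Type*} {n : ℕ} (P : α → Prop) (f : Fin n → α) (x : α) :
    #{i | P (Fin.snoc (α := fun _ => α) f x i)} = #{i | P (f i)} + if P x then 1 else 0 := by
  simp only [card_filter, Fin.sum_univ_castSucc, Fin.snoc_castSucc, Fin.snoc_last]

theorem Finset.sum_mul_sum_fiberwise {ι κ R : Type*} [Fintype κ] [NonUnitalNonAssocSemiring R]
    (s : Finset ι) (k : ι → κ) (g : κ → R) (h : ι → R) :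
    ∑ j, g j * ∑ i ∈ s with k i = j, h i = ∑ i ∈ s, g (k i) * h i := by
  rw [← sum_fiberwise s k]
  refine sum_congr rfl fun j _ => ?_
  rw [mul_sum]
  exact sum_congr rfl fun i hi => by rw [(mem_filter.mp hi).2]

namespace LTS

variable (M : LTS Q S)

theorem snoc_mem_pathFinset_succ_iff {n : ℕ} (f : Fin (n + 1) → Q) (w : Fin n → S) (q : Q)
    (a : S) :
    (Fin.snoc f q, Fin.snoc w a) ∈ pathFinset M (n + 1) ↔
      (f, w) ∈ pathFinset M n ∧ (f (Fin.last n), a, q) ∈ M.trans := by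
  simp only [pathFinset, mem_filter, mem_univ, true_and, Fin.forall_fin_succ',
    ← Fin.castSucc_zero, Fin.succ_castSucc, Fin.snoc_castSucc, Fin.succ_last, Fin.snoc_last,
    and_assoc]

theorem sum_pathFinset_succ_last_eq {R : Type*} [AddCommMonoid R] (n : ℕ) (q : Q)
    (F : (Fin (n + 2) → Q) × (Fin (n + 1) → S) → R) :
    ∑ p ∈ pathFinset M (n + 1) with p.1 (Fin.last (n + 1)) = q, F p =
      ∑ p ∈ pathFinset M n, ∑ a with (p.1 (Fin.last n), a, q) ∈ M.trans,
        F (Fin.snoc p.1 q, Fin.snoc p.2 a) := by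
  rw [sum_sigma']
  refine sum_nbij' (fun p => ⟨(Fin.init p.1, Fin.init p.2), p.2 (Fin.last n)⟩)
    (fun x => (Fin.snoc x.1.1 q, Fin.snoc x.1.2 x.2)) ?_ ?_ ?_ ?_ ?_
  · rintro ⟨f, w⟩ hp
    obtain ⟨hpath, rfl⟩ := mem_filter.mp hp
    rw [← Fin.snoc_init_self f, ← Fin.snoc_init_self w, snoc_mem_pathFinset_succ_iff] at hpath
    simpa only [mem_sigma, mem_filter, mem_univ, true_and] using hpath
  · rintro ⟨⟨f, w⟩, a⟩ hx
    simp only [mem_sigma, mem_filter, mem_univ, true_and] at hx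
    simpa [snoc_mem_pathFinset_succ_iff] using hx
  · rintro ⟨f, w⟩ hp
    obtain ⟨-, rfl⟩ := mem_filter.mp hp
    simp
  · rintro ⟨⟨f, w⟩, a⟩ -
    simp
  · rintro ⟨f, w⟩ hp
    obtain ⟨-, rfl⟩ := mem_filter.mp hp
    simp

end LTS

/-- For every `n` and state `q'`,
`α_{n+1}(q') = Σ_q D_{q'q} · α_n(q) + Σ_q A_{q'q} · β_n(q)`. -/
theorem stmt_4 (M : LTS Q S) (Acc : Set Q) (n : ℕ) (q' : Q) :
    alpha M Acc (n + 1) q' =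
      (∑ q : Q, predMatrix M q' q * alpha M Acc n q) +
        ∑ q : Q, accMatrix M Acc q' q * beta M n q := by
  have hacc (q : Q) : accMatrix M Acc q' q * beta M n q = predMatrix M q' q *
      ∑ p ∈ pathFinset M n with p.1 (Fin.last n) = q, if q' ∈ Acc then 1 else 0 := by
    rw [accMatrix, beta, sum_const, smul_eq_mul]
    split_ifs <;> simp
  calc alpha M Acc (n + 1) q'
      = ∑ p ∈ pathFinset M n, predMatrix M q' (p.1 (Fin.last n)) *
          (#{i | p.1 i ∈ Acc} + if q' ∈ Acc then 1 else 0) := by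
        rw [alpha, M.sum_pathFinset_succ_last_eq]
        simp only [Fin.card_filter_univ_snoc, sum_const, smul_eq_mul, predMatrix]
    _ = _ := by
        simp only [alpha, hacc, sum_mul_sum_fiberwise, mul_add, sum_add_distrib]
end

section
/- Let M be a finite labeled transition system with states Q, labels S, initial states Q₀, transition relation Δ, and accepting set Acc ⊆ Q; let D, A, ξ and v be as defined. Then for every n ≥ 0, ξ^{n+1} ⬝ v = (α_n, α⃗_{n+1}, β⃗_{n+1}) as a vector indexed by Unit ⊕ Q ⊕ Q, where α⃗_{n+1} = (α_{n+1}(q))_{q∈Q} and β⃗_{n+1} = (β_{n+1}(q))_{q∈Q}. In particular, the first entry of ξ^{n+1} ⬝ v equals α_n. -/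
open scoped Classical

variable {Q S : Type*} [Fintype Q] [Fintype S]

/-- `alphaTot M Acc n` is the total number of visits to accepting states over all
paths of length `n` of `M`. -/
noncomputable def alphaTot (M : LTS Q S) (Acc : Set Q) (n : ℕ) : ℕ :=
  ∑ q : Q, alpha M Acc n q

/-- The recurrence matrix `ξ = [[0, 1ᵀ, 0ᵀ], [0, D, A], [0, 0, D]]`, indexed by
`Unit ⊕ Q ⊕ Q`. -/
noncomputable def xi (M : LTS Q S) (Acc : Set Q) :
    Matrix (Unit ⊕ Q ⊕ Q) (Unit ⊕ Q ⊕ Q) ℕ := fun i j =>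
  match i, j with
  | Sum.inl _, Sum.inr (Sum.inl _) => 1
  | Sum.inr (Sum.inl i'), Sum.inr (Sum.inl j') => predMatrix M i' j'
  | Sum.inr (Sum.inl i'), Sum.inr (Sum.inr j') => accMatrix M Acc i' j'
  | Sum.inr (Sum.inr i'), Sum.inr (Sum.inr j') => predMatrix M i' j'
  | _, _ => 0

/-- The initial condition vector `v = (0, α⃗₀, β⃗₀)`: `β⃗₀` is the indicator vector of the
initial states, `α⃗₀` the indicator vector of states both initial and accepting. -/
noncomputable def initVec (M : LTS Q S) (Acc : Set Q) : (Unit ⊕ Q ⊕ Q) → ℕ :=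
  Sum.elim (fun _ => 0)
    (Sum.elim (fun q => if q ∈ M.init ∧ q ∈ Acc then 1 else 0)
      (fun q => if q ∈ M.init then 1 else 0))

/-! Splitting a path of length `n + 1` at its last transition gives the recurrences
`β_{n+1} = D β_n` and `α_{n+1} = D α_n + A β_n`: the new last state adds one visit to every
extended path exactly when it is accepting. The lower blocks of `ξ` apply these recurrences and
its first row sums `α_n`, so the claim follows by induction on `n`. -/

theorem Fin.card_filter_snoc_mem {α : Type*} {n : ℕ} (g : Fin n → α) (x : α) (s : Set α) :
    (Finset.univ.filter (fun i : Fin (n + 1) => (Fin.snoc g x : Fin (n + 1) → α) i ∈ s)).card =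
      (Finset.univ.filter (fun i : Fin n => g i ∈ s)).card + if x ∈ s then 1 else 0 := by
  simp only [Finset.card_filter, Fin.sum_univ_castSucc, Fin.snoc_castSucc, Fin.snoc_last]

namespace LTS

open Matrix

variable (M : LTS Q S)

noncomputable def pathsTo (n : ℕ) (q : Q) : Finset ((Fin (n + 1) → Q) × (Fin n → S)) :=
  (pathFinset M n).filter (fun p => p.1 (Fin.last n) = q)

theorem beta_eq_card_pathsTo (n : ℕ) (q : Q) : beta M n q = (M.pathsTo n q).card := rfl

theorem alpha_eq_sum_pathsTo (Acc : Set Q) (n : ℕ) (q : Q) :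
    alpha M Acc n q =
      ∑ p ∈ M.pathsTo n q, (Finset.univ.filter (fun i : Fin (n + 1) => p.1 i ∈ Acc)).card :=
  rfl

theorem mem_pathFinset_succ {n : ℕ} {g : Fin (n + 2) → Q} {w : Fin (n + 1) → S} :
    (g, w) ∈ pathFinset M (n + 1) ↔
      (Fin.init g, Fin.init w) ∈ pathFinset M n ∧
        (g (Fin.last n).castSucc, w (Fin.last n), g (Fin.last (n + 1))) ∈ M.trans := by
  simp only [pathFinset, Finset.mem_filter, Finset.mem_univ, true_and,
    Fin.forall_fin_succ' (n := n), Fin.init, Fin.castSucc_zero, Fin.succ_castSucc, Fin.succ_last,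
    and_assoc]

theorem snoc_mem_pathFinset {n : ℕ} {p : (Fin (n + 1) → Q) × (Fin n → S)} {q : Q} {a : S} :
    (Fin.snoc p.1 q, Fin.snoc p.2 a) ∈ pathFinset M (n + 1) ↔
      p ∈ pathFinset M n ∧ (p.1 (Fin.last n), a, q) ∈ M.trans := by
  simp only [mem_pathFinset_succ, Fin.init_snoc, Fin.snoc_castSucc, Fin.snoc_last]

theorem sum_pathsTo_succ {R : Type*} [AddCommMonoid R] (n : ℕ) (q : Q)
    (f : (Fin (n + 2) → Q) × (Fin (n + 1) → S) → R) :
    ∑ p ∈ M.pathsTo (n + 1) q, f p =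
      ∑ j, ∑ p ∈ M.pathsTo n j, ∑ a ∈ Finset.univ.filter (fun a => (j, a, q) ∈ M.trans),
        f (Fin.snoc p.1 q, Fin.snoc p.2 a) := by
  calc ∑ p ∈ M.pathsTo (n + 1) q, f p
      = ∑ x ∈ (pathFinset M n ×ˢ Finset.univ).filter
            (fun x => (x.1.1 (Fin.last n), x.2, q) ∈ M.trans),
          f (Fin.snoc x.1.1 q, Fin.snoc x.1.2 x.2) := by
        refine Finset.sum_nbij' (fun p => ((Fin.init p.1, Fin.init p.2), p.2 (Fin.last n)))
          (fun x => (Fin.snoc x.1.1 q, Fin.snoc x.1.2 x.2)) ?_ ?_ ?_ ?_ ?_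
        · rintro ⟨g, w⟩ hp
          obtain ⟨hpath, rfl⟩ := Finset.mem_filter.1 hp
          obtain ⟨hinit, htr⟩ := (mem_pathFinset_succ M).1 hpath
          exact Finset.mem_filter.2 ⟨Finset.mem_product.2 ⟨hinit, Finset.mem_univ _⟩, htr⟩
        · rintro ⟨p, a⟩ hx
          simp_all [pathsTo, snoc_mem_pathFinset]
        · rintro ⟨g, w⟩ hp
          simp_all [pathsTo, ← (Finset.mem_filter.1 hp).2]
        · rintro ⟨p, a⟩ -
          simp
        · rintro ⟨g, w⟩ hp
          simp_all [pathsTo, ← (Finset.mem_filter.1 hp).2]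
    _ = ∑ p ∈ pathFinset M n,
          ∑ a ∈ Finset.univ.filter (fun a => (p.1 (Fin.last n), a, q) ∈ M.trans),
            f (Fin.snoc p.1 q, Fin.snoc p.2 a) := by
        simp_rw [Finset.sum_filter, Finset.sum_product]
    _ = _ := by
        rw [← Finset.sum_fiberwise (pathFinset M n) (fun p => p.1 (Fin.last n))]
        refine Finset.sum_congr rfl fun j _ => Finset.sum_congr rfl fun p hp => ?_
        rw [(Finset.mem_filter.1 hp).2]

omit [Fintype Q] in
theorem sum_const_filter_trans {R : Type*} [AddCommMonoid R] (j q : Q) (c : R) :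
    ∑ _a ∈ Finset.univ.filter (fun a => (j, a, q) ∈ M.trans), c = predMatrix M q j • c :=
  Finset.sum_const c

theorem beta_succ (n : ℕ) : beta M (n + 1) = predMatrix M *ᵥ beta M n := by
  funext q
  rw [beta_eq_card_pathsTo, Finset.card_eq_sum_ones, sum_pathsTo_succ]
  refine Finset.sum_congr rfl fun j _ => ?_
  simp only [sum_const_filter_trans, smul_eq_mul, mul_one]
  rw [Finset.sum_const, smul_eq_mul, beta_eq_card_pathsTo, mul_comm]

theorem alpha_succ (Acc : Set Q) (n : ℕ) :
    alpha M Acc (n + 1) = predMatrix M *ᵥ alpha M Acc n + accMatrix M Acc *ᵥ beta M n := by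
  funext q
  simp only [alpha_eq_sum_pathsTo, sum_pathsTo_succ, Fin.card_filter_snoc_mem,
    sum_const_filter_trans, Pi.add_apply, mulVec, dotProduct, ← Finset.sum_add_distrib]
  refine Finset.sum_congr rfl fun j _ => ?_
  simp only [smul_eq_mul, mul_add, Finset.sum_add_distrib, ← Finset.mul_sum, Finset.sum_const,
    beta_eq_card_pathsTo, accMatrix]
  split_ifs <;> ring

theorem pathsTo_zero (q : Q) :
    M.pathsTo 0 q = if q ∈ M.init then {(fun _ => q, Fin.elim0)} else ∅ := by
  ext ⟨g, w⟩
  have hw : w = Fin.elim0 := Subsingleton.elim _ _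
  have hg : g = (fun _ => q) ↔ g 0 = q :=
    ⟨fun h => h ▸ rfl, fun h => funext (Fin.forall_fin_one.2 h)⟩
  split_ifs with hq
  · simpa [pathsTo, pathFinset, hw, hg] using fun h : g 0 = q => h ▸ hq
  · simpa [pathsTo, pathFinset, hw, hg] using fun h (h' : g 0 = q) => hq (h' ▸ h)

theorem beta_zero (q : Q) : beta M 0 q = if q ∈ M.init then 1 else 0 := by
  rw [beta_eq_card_pathsTo, pathsTo_zero]
  split_ifs <;> rfl

theorem alpha_zero (Acc : Set Q) (q : Q) :
    alpha M Acc 0 q = if q ∈ M.init ∧ q ∈ Acc then 1 else 0 := by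
  rw [alpha_eq_sum_pathsTo, pathsTo_zero]
  by_cases hq : q ∈ M.init <;> by_cases hacc : q ∈ Acc <;> simp [hq, hacc]

theorem initVec_eq (Acc : Set Q) :
    initVec M Acc = Sum.elim (fun _ => 0) (Sum.elim (alpha M Acc 0) (beta M 0)) := by
  funext i
  rcases i with _ | q | q <;> simp [initVec, alpha_zero, beta_zero]

theorem xi_mulVec (Acc : Set Q) (x : ℕ) (u v : Q → ℕ) :
    xi M Acc *ᵥ Sum.elim (fun _ => x) (Sum.elim u v) =
      Sum.elim (fun _ => ∑ q, u q)
        (Sum.elim (predMatrix M *ᵥ u + accMatrix M Acc *ᵥ v) (predMatrix M *ᵥ v)) := by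
  funext i
  rcases i with _ | q | q <;> simp [mulVec, dotProduct, xi, Fintype.sum_sum_type]

theorem xi_mulVec_alpha_beta (Acc : Set Q) (x n : ℕ) :
    xi M Acc *ᵥ Sum.elim (fun _ => x) (Sum.elim (alpha M Acc n) (beta M n)) =
      Sum.elim (fun _ => alphaTot M Acc n) (Sum.elim (alpha M Acc (n + 1)) (beta M (n + 1))) := by
  rw [xi_mulVec, alpha_succ, beta_succ]
  rfl

theorem xi_pow_succ_mulVec_initVec [DecidableEq Q] (Acc : Set Q) (n : ℕ) :
    (xi M Acc ^ (n + 1)) *ᵥ initVec M Acc =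
      Sum.elim (fun _ => alphaTot M Acc n) (Sum.elim (alpha M Acc (n + 1)) (beta M (n + 1))) := by
  induction n with
  | zero => rw [pow_one, initVec_eq, xi_mulVec_alpha_beta]
  | succ n ih => rw [pow_succ', ← mulVec_mulVec, ih, xi_mulVec_alpha_beta]

end LTS

/-- For every `n ≥ 0`, `ξ^{n+1} ⬝ v = (α_n, α⃗_{n+1}, β⃗_{n+1})`; in particular the first
entry of `ξ^{n+1} ⬝ v` equals `α_n`. -/
theorem stmt_6 [DecidableEq Q] (M : LTS Q S) (Acc : Set Q) (n : ℕ) :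
    (xi M Acc ^ (n + 1)).mulVec (initVec M Acc) =
      Sum.elim (fun _ => alphaTot M Acc n)
        (Sum.elim (fun q => alpha M Acc (n + 1) q) (fun q => beta M (n + 1) q)) ∧
    (xi M Acc ^ (n + 1)).mulVec (initVec M Acc) (Sum.inl ()) = alphaTot M Acc n := by
  have h := M.xi_pow_succ_mulVec_initVec Acc n
  exact ⟨h, by rw [h]; rfl⟩
end

section
/- Let M be a finite labeled transition system with states Q, labels S, initial states Q₀ and transition relation Δ, and let f be a DFA over S with states R, initial state r₀, accepting set F, and transition function δ. Let α_n denote the total accepting-visit count of the synchronous product LTS M‖f (whose accepting set is Q × F). Then for every n ≥ 0, α_n = Σ_w mult_M(w) · f(w), where the sum ranges over all words w of length n over S, mult_M(w) is the multiplicity of w in M, and f(w) is the number of accepting states visited by the DFA when consuming w. -/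
open scoped Classical

/-- A deterministic finite automaton over labels `S` with states `R`. -/
structure DFAc (S R : Type*) where
  start : R
  accept : Set R
  step : R → S → R

variable {Q S : Type*} [Fintype Q] [Fintype S]

/-- `mult M n w` is the multiplicity of the word `w` of length `n` in `M`: the number of
state sequences `q̂` such that `(q̂, w)` is a path of `M`. -/
noncomputable def mult (M : LTS Q S) (n : ℕ) (w : Fin n → S) : ℕ :=
  (Finset.univ.filter (fun qh : Fin (n + 1) → Q =>
    qh 0 ∈ M.init ∧ ∀ i : Fin n, (qh i.castSucc, w i, qh i.succ) ∈ M.trans)).card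

/-- The state visited by the DFA `f` after consuming the first `i` letters of `w`. -/
def dfaState {S R : Type*} (f : DFAc S R) {n : ℕ} (w : Fin n → S) (i : Fin (n + 1)) : R :=
  ((List.ofFn w).take i.val).foldl f.step f.start

/-- `dfaCount f w` is the number of accepting states visited by the DFA `f` while
consuming the word `w` (i.e. the value `f(w)` of the fitness function). -/
noncomputable def dfaCount {S R : Type*} (f : DFAc S R) {n : ℕ} (w : Fin n → S) : ℕ :=
  (Finset.univ.filter (fun i : Fin (n + 1) => dfaState f w i ∈ f.accept)).card

/-- The synchronous product `M ‖ f` of an LTS and a DFA. -/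
def prodLTS {Q S R : Type*} (M : LTS Q S) (f : DFAc S R) : LTS (Q × R) S where
  init := {qr | qr.1 ∈ M.init ∧ qr.2 = f.start}
  trans := {t | (t.1.1, t.2.1, t.2.2.1) ∈ M.trans ∧ f.step t.1.2 t.2.1 = t.2.2.2}

lemma dfaState_zero {S R : Type*} (f : DFAc S R) {n : ℕ} (w : Fin n → S) :
    dfaState f w 0 = f.start := by
  simp [dfaState]

lemma dfaState_succ {S R : Type*} (f : DFAc S R) {n : ℕ} (w : Fin n → S) (i : Fin n) :
    dfaState f w i.succ = f.step (dfaState f w i.castSucc) (w i) := by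
  unfold dfaState
  have h1 : (i.succ : Fin (n+1)).val = i.val + 1 := rfl
  have h2 : ((i.castSucc : Fin (n+1))).val = i.val := rfl
  rw [h1, h2, List.take_succ]
  have hlen : i.val < (List.ofFn w).length := by simp
  rw [List.getElem?_eq_getElem hlen]
  simp [List.foldl_append]

lemma prodpath_snd {R : Type*} [Fintype R] (M : LTS Q S) (f : DFAc S R) {n : ℕ}
    (p : (Fin (n + 1) → Q × R) × (Fin n → S)) (hp : p ∈ pathFinset (prodLTS M f) n) :
    ∀ i, (p.1 i).2 = dfaState f p.2 i := by
  simp only [pathFinset, Finset.mem_filter, Finset.mem_univ, true_and] at hp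
  intro i
  induction i using Fin.induction with
  | zero => rw [dfaState_zero]; exact hp.1.2
  | succ j ih =>
    rw [dfaState_succ, ← ih]
    exact ((hp.2 j).2).symm

/-- The total accepting-visit count `α_n` of the product `M ‖ f` (with accepting set
`Q × F`) equals `Σ_w mult_M(w) · f(w)`, the sum over all words `w` of length `n`. -/
theorem stmt_7 {R : Type*} [Fintype R] (M : LTS Q S) (f : DFAc S R) (n : ℕ) :
    alphaTot (prodLTS M f) {qr : Q × R | qr.2 ∈ f.accept} n =
      ∑ w : Fin n → S, mult M n w * dfaCount f w := by
  have hL : alphaTot (prodLTS M f) {qr : Q × R | qr.2 ∈ f.accept} n =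
      ∑ p ∈ pathFinset (prodLTS M f) n,
        (Finset.univ.filter (fun i : Fin (n + 1) =>
          p.1 i ∈ {qr : Q × R | qr.2 ∈ f.accept})).card := by
    unfold alphaTot alpha
    convert Finset.sum_fiberwise (pathFinset (prodLTS M f) n)
      (fun p => p.1 (Fin.last n))
      (fun p => (Finset.univ.filter (fun i : Fin (n + 1) =>
          p.1 i ∈ {qr : Q × R | qr.2 ∈ f.accept})).card) using 3
    exact Finset.filter_congr_decidable _ _ _
  have hR : ∑ w : Fin n → S, mult M n w * dfaCount f w =
      ∑ p ∈ pathFinset M n, dfaCount f p.2 := by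
    unfold mult pathFinset
    rw [Finset.sum_filter, Fintype.sum_prod_type, Finset.sum_comm]
    apply Finset.sum_congr rfl
    intro w _
    rw [Finset.card_filter, Finset.sum_mul]
    apply Finset.sum_congr rfl
    intro qh _
    by_cases h : qh 0 ∈ M.init ∧ ∀ i : Fin n, (qh i.castSucc, w i, qh i.succ) ∈ M.trans <;>
      simp [h]
  rw [hL, hR]
  apply Finset.sum_nbij' (i := fun p => ((fun i => (p.1 i).1), p.2))
    (j := fun p => ((fun i => (p.1 i, dfaState f p.2 i)), p.2))
  · intro p hp
    simp only [pathFinset, Finset.mem_filter, Finset.mem_univ, true_and] at hp ⊢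
    exact ⟨hp.1.1, fun i => (hp.2 i).1⟩
  · intro p hp
    simp only [pathFinset, Finset.mem_filter, Finset.mem_univ, true_and] at hp ⊢
    refine ⟨⟨hp.1, dfaState_zero f p.2⟩, fun i => ⟨hp.2 i, (dfaState_succ f p.2 i).symm⟩⟩
  · intro p hp
    have h2 := prodpath_snd M f p hp
    ext i
    · rfl
    · exact (h2 i).symm
    · rfl
  · intro p hp
    rfl
  · intro p hp
    have h2 := prodpath_snd M f p hp
    unfold dfaCount
    congr 1
    ext i
    simp only [Finset.mem_filter, Finset.mem_univ, true_and, Set.mem_setOf_eq, h2 i]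
end

section
/- Define sequences b₀, b₁, a₀, a₁ : ℕ → ℕ by: b₀(0) = 1, b₁(0) = 0, a₀(0) = 0, a₁(0) = 0, and for all n ≥ 0: b₀(n+1) = b₀(n) + b₁(n), b₁(n+1) = b₀(n), a₀(n+1) = a₀(n) + a₁(n), a₁(n+1) = a₀(n) + b₀(n). Let a(n) := a₀(n) + a₁(n). Then the sequence n ↦ a(n)/a(n+1), viewed in ℝ, converges as n → ∞ to 2/(1 + √5). -/
/-!
`b₀(n) = F(n+1)`, and `a = a₀ + a₁` satisfies `a(n+2) = a(n+1) + a(n) + F(n+2)` with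
`a(0) = 0`, `a(1) = 1`, whence `5 a(n) = n (F(n) + F(n+2)) + 2 F(n)`. As `F(n) / F(n+1) → φ⁻¹`,
this makes `a(n)` asymptotically proportional to `n F(n+1)`, and asymptotically proportional
sequences have the same limit of consecutive ratios, here
`n F(n+1) / ((n+1) F(n+2)) → φ⁻¹ = 2 / (1 + √5)`.
-/

open Filter Topology Real
open scoped goldenRatio

theorem eq_fib_succ_and_eq_fib {b0 b1 : ℕ → ℕ} (hb00 : b0 0 = 1) (hb10 : b1 0 = 0)
    (hb0 : ∀ n, b0 (n + 1) = b0 n + b1 n) (hb1 : ∀ n, b1 (n + 1) = b0 n) (n : ℕ) :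
    b0 n = Nat.fib (n + 1) ∧ b1 n = Nat.fib n := by
  induction n with
  | zero => simp [hb00, hb10]
  | succ n ih => rw [hb0, hb1, ih.1, ih.2, Nat.fib_add_two, add_comm]; exact ⟨rfl, rfl⟩

theorem five_mul_eq_of_recurrence_add_fib {x : ℕ → ℕ} (h0 : x 0 = 0) (h1 : x 1 = 1)
    (hrec : ∀ n, x (n + 2) = x (n + 1) + x n + Nat.fib (n + 2)) (n : ℕ) :
    5 * x n = n * (Nat.fib n + Nat.fib (n + 2)) + 2 * Nat.fib n := by
  induction n using Nat.twoStepInduction with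
  | zero => simp [h0]
  | one => simp [h1, Nat.fib_add_two]
  | more n ih0 ih1 =>
    rw [hrec, mul_add, mul_add, ih0, ih1]
    simp only [Nat.fib_add_two]
    ring

theorem tendsto_div_natCast_mul_fib_succ_of_recurrence {x : ℕ → ℕ} (h0 : x 0 = 0) (h1 : x 1 = 1)
    (hrec : ∀ n, x (n + 2) = x (n + 1) + x n + Nat.fib (n + 2)) :
    Tendsto (fun n : ℕ => (x n : ℝ) / (n * Nat.fib (n + 1))) atTop (𝓝 ((φ - ψ) / 5)) := by
  have hshift : Tendsto (fun n : ℕ => (Nat.fib (n + 2) / Nat.fib (n + 1) : ℝ)) atTop (𝓝 φ) :=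
    tendsto_fib_succ_div_fib_atTop.comp (tendsto_add_atTop_nat 1)
  have hlim := (tendsto_fib_div_fib_succ_atTop.add hshift).add
    ((tendsto_one_div_atTop_nhds_zero_nat.mul tendsto_fib_div_fib_succ_atTop).const_mul 2)
  rw [show φ - ψ = -ψ + φ + 2 * (0 * -ψ) by ring]
  refine (hlim.div_const 5).congr' ?_
  filter_upwards [eventually_ne_atTop 0] with n hn
  have hx : (5 * x n : ℝ) = n * (Nat.fib n + Nat.fib (n + 2)) + 2 * Nat.fib n := by
    exact_mod_cast five_mul_eq_of_recurrence_add_fib h0 h1 hrec n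
  have := Nat.fib_pos.2 n.succ_pos
  field_simp
  linear_combination -hx

theorem tendsto_div_succ_of_tendsto_div {u v : ℕ → ℝ} {c L : ℝ} (hc : c ≠ 0)
    (hv : ∀ᶠ n in atTop, v n ≠ 0) (huv : Tendsto (fun n => u n / v n) atTop (𝓝 c))
    (hvL : Tendsto (fun n => v n / v (n + 1)) atTop (𝓝 L)) :
    Tendsto (fun n => u n / u (n + 1)) atTop (𝓝 L) := by
  have hlim := (huv.mul hvL).div (huv.comp (tendsto_add_atTop_nat 1)) hc
  rw [mul_div_cancel_left₀ L hc] at hlim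
  refine hlim.congr' ?_
  filter_upwards [hv, (tendsto_add_atTop_nat 1).eventually hv] with n hn hn1
  rcases eq_or_ne (u (n + 1)) 0 with h | h
  · simp [h]
  · simp only [Pi.div_apply, Function.comp_apply]
    field_simp

theorem tendsto_natCast_mul_fib_succ_div :
    Tendsto (fun n : ℕ => ((n : ℝ) * Nat.fib (n + 1)) / (((n + 1 : ℕ) : ℝ) * Nat.fib (n + 1 + 1)))
      atTop (𝓝 φ⁻¹) := by
  have hlim := (tendsto_natCast_div_add_atTop (1 : ℝ)).mul
    (tendsto_fib_div_fib_succ_atTop.comp (tendsto_add_atTop_nat 1))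
  rw [one_mul, ← inv_goldenRatio] at hlim
  refine hlim.congr fun n => ?_
  simp only [Function.comp_apply, Nat.cast_add, Nat.cast_one, mul_div_mul_comm]

theorem tendsto_div_succ_of_recurrence_add_fib {x : ℕ → ℕ} (h0 : x 0 = 0) (h1 : x 1 = 1)
    (hrec : ∀ n, x (n + 2) = x (n + 1) + x n + Nat.fib (n + 2)) :
    Tendsto (fun n => (x n : ℝ) / x (n + 1)) atTop (𝓝 φ⁻¹) := by
  refine tendsto_div_succ_of_tendsto_div (v := fun n => n * Nat.fib (n + 1)) ?_ ?_
    (tendsto_div_natCast_mul_fib_succ_of_recurrence h0 h1 hrec) tendsto_natCast_mul_fib_succ_div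
  · rw [goldenRatio_sub_goldenConj]
    positivity
  · filter_upwards [eventually_ne_atTop 0] with n hn
    have := Nat.fib_pos.2 n.succ_pos
    positivity

/-- For the recurrence `b₀(n+1) = b₀(n) + b₁(n)`, `b₁(n+1) = b₀(n)`,
`a₀(n+1) = a₀(n) + a₁(n)`, `a₁(n+1) = a₀(n) + b₀(n)` with initial values
`b₀(0) = 1`, `b₁(0) = a₀(0) = a₁(0) = 0`, setting `a(n) = a₀(n) + a₁(n)`,
the real sequence `a(n) / a(n+1)` converges to `2 / (1 + √5)`. -/
theorem stmt_9 (b0 b1 a0 a1 : ℕ → ℕ)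
    (hb00 : b0 0 = 1) (hb10 : b1 0 = 0) (ha00 : a0 0 = 0) (ha10 : a1 0 = 0)
    (hb0 : ∀ n, b0 (n + 1) = b0 n + b1 n)
    (hb1 : ∀ n, b1 (n + 1) = b0 n)
    (ha0 : ∀ n, a0 (n + 1) = a0 n + a1 n)
    (ha1 : ∀ n, a1 (n + 1) = a0 n + b0 n) :
    Tendsto (fun n : ℕ => ((a0 n + a1 n : ℕ) : ℝ) / ((a0 (n + 1) + a1 (n + 1) : ℕ) : ℝ))
      atTop (nhds (2 / (1 + Real.sqrt 5))) := by
  have hb (n : ℕ) : b0 n = Nat.fib (n + 1) := (eq_fib_succ_and_eq_fib hb00 hb10 hb0 hb1 n).1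
  have hlim := tendsto_div_succ_of_recurrence_add_fib (x := fun n => a0 n + a1 n)
    (by simp [ha00, ha10]) (by simp [ha0, ha1, ha00, ha10, hb00])
    (fun n => by simp only [ha0, ha1, hb]; ring)
  rwa [goldenRatio, inv_div] at hlim
end

section
/- Let D be the 4×4 matrix over ℕ with rows (0,0,0,0), (1,0,1,1), (0,1,0,0), (0,1,0,0), and let A be the 4×4 matrix over ℕ that is zero everywhere except A₄₂ = 1 (row 4, column 2, in 1-based indexing). Define vectors β, α, α' : ℕ → (Fin 4 → ℕ) by: β(0) = (1,0,0,0), α(0) = α'(0) = (0,0,0,0), and for all n ≥ 0: β(n+1) = D·β(n), α(n+1) = D·α(n) + A·β(n), α'(n+1) = D·α'(n) + D·β(n) (matrix–vector products over ℕ). Let a(n) := Σ_{i} α(n)(i) and a'(n) := Σ_{i} α'(n)(i). Then the sequence n ↦ a(n)/a'(n), viewed in ℝ, converges as n → ∞ to 1/4. -/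
open Filter

/-- The predecessor matrix of the product of the simple communication protocol (good
receiver) with the send–ack counting DFA. -/
def D4 : Matrix (Fin 4) (Fin 4) ℕ :=
  !![0,0,0,0; 1,0,1,1; 0,1,0,0; 0,1,0,0]

/-- The accepting matrix: zero everywhere except row 4, column 2 (1-based), which is 1. -/
def A4 : Matrix (Fin 4) (Fin 4) ℕ :=
  !![0,0,0,0; 0,0,0,0; 0,0,0,0; 0,1,0,0]

/-
Unrolling the recurrence gives `α' n = n • β n`, while `β` alternates between `(0, 2^m, 0, 0)` at
`n = 2m + 1` and `(0, 0, 2^m, 2^m)` at `n = 2m + 2`, from which `α` is computed explicitly.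
Writing `s n = Σᵢ β n i > 0`, this gives `a' n = n · s n`, and `a' n - 4 a n` equals `s n` for odd
`n` and `0` for even `n`. Hence `|a n / a' n - 1/4| ≤ 1/(4n)`.
-/

open Topology Matrix

theorem Matrix.eq_nsmul_of_mulVec_recurrence {ι R : Type*} [Fintype ι] [Semiring R]
    (M : Matrix ι ι R) {x y : ℕ → ι → R} (hx0 : x 0 = 0)
    (hy : ∀ n, y (n + 1) = M *ᵥ y n) (hx : ∀ n, x (n + 1) = M *ᵥ x n + M *ᵥ y n) (n : ℕ) :
    x n = n • y n := by
  induction n with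
  | zero => rw [hx0, zero_smul]
  | succ n ih => rw [hx n, ih, M.mulVec_smul, ← hy n, succ_nsmul]

theorem tendsto_div_natCast_mul_of_abs_sub_le {a s : ℕ → ℝ} {c : ℝ} (hc : c ≠ 0)
    (hs : ∀ n, 0 < s n) (h : ∀ n, |c * a n - n * s n| ≤ s n) :
    Tendsto (fun n : ℕ => a n / (n * s n)) atTop (𝓝 (1 / c)) := by
  rw [tendsto_iff_norm_sub_tendsto_zero]
  refine squeeze_zero' (Eventually.of_forall fun _ => norm_nonneg _) ?_
    (tendsto_const_div_atTop_nhds_zero_nat |c|⁻¹)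
  filter_upwards [eventually_ge_atTop 1] with n hn
  have hns : (0 : ℝ) < n * s n := mul_pos (by exact_mod_cast hn) (hs n)
  have hdiff : a n / (n * s n) - 1 / c = (c * a n - n * s n) / (c * (n * s n)) := by
    rw [div_sub_div _ _ hns.ne' hc]
    ring
  calc ‖a n / (n * s n) - 1 / c‖ = |c * a n - n * s n| / (|c| * (n * s n)) := by
        rw [hdiff, Real.norm_eq_abs, abs_div, abs_mul, abs_of_pos hns]
    _ ≤ s n / (|c| * (n * s n)) := by gcongr; exact h n
    _ = |c|⁻¹ / n := by field_simp [(hs n).ne']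

theorem D4_mulVec (v : Fin 4 → ℕ) : D4 *ᵥ v = ![0, v 0 + v 2 + v 3, v 1, v 1] := by
  ext i
  fin_cases i <;> simp [D4, Matrix.mulVec, dotProduct, Fin.sum_univ_four]

theorem A4_mulVec (v : Fin 4 → ℕ) : A4 *ᵥ v = ![0, 0, 0, v 1] := by
  ext i
  fin_cases i <;> simp [A4, Matrix.mulVec, dotProduct, Fin.sum_univ_four]

section

variable {β α : ℕ → Fin 4 → ℕ}

theorem D4_orbit_eq (hβ0 : β 0 = ![1, 0, 0, 0]) (hβ : ∀ n, β (n + 1) = D4 *ᵥ β n) (m : ℕ) :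
    β (2 * m + 1) = ![0, 2 ^ m, 0, 0] ∧ β (2 * m + 2) = ![0, 0, 2 ^ m, 2 ^ m] := by
  have step : ∀ k, β (2 * k + 1) = ![0, 2 ^ k, 0, 0] → β (2 * k + 2) = ![0, 0, 2 ^ k, 2 ^ k] :=
    fun k hk => by rw [hβ, hk, D4_mulVec]; simp
  induction m with
  | zero =>
    have h1 : β 1 = ![0, 1, 0, 0] := by rw [hβ, hβ0, D4_mulVec]; simp
    exact ⟨by simpa using h1, step 0 (by simpa using h1)⟩
  | succ m ih =>
    have h1 : β (2 * (m + 1) + 1) = ![0, 2 ^ (m + 1), 0, 0] := by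
      rw [show 2 * (m + 1) + 1 = 2 * m + 2 + 1 by ring, hβ, ih.2, D4_mulVec]
      simp [pow_succ, mul_two]
    exact ⟨h1, step _ h1⟩

-- `α (2m+1)` has the entry `m * 2 ^ (m - 1)`, hence the doubling.
theorem two_nsmul_accepting_eq (hβ0 : β 0 = ![1, 0, 0, 0]) (hβ : ∀ n, β (n + 1) = D4 *ᵥ β n)
    (hα0 : α 0 = ![0, 0, 0, 0]) (hα : ∀ n, α (n + 1) = D4 *ᵥ α n + A4 *ᵥ β n) (m : ℕ) :
    2 • α (2 * m + 1) = ![0, m * 2 ^ m, 0, 0] ∧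
      2 • α (2 * m + 2) = ![0, 0, m * 2 ^ m, (m + 2) * 2 ^ m] := by
  have hα2 : ∀ n, 2 • α (n + 1) = D4 *ᵥ (2 • α n) + A4 *ᵥ (2 • β n) := fun n => by
    rw [hα, smul_add, D4.mulVec_smul, A4.mulVec_smul]
  have step : ∀ k, 2 • α (2 * k + 1) = ![0, k * 2 ^ k, 0, 0] →
      2 • α (2 * k + 2) = ![0, 0, k * 2 ^ k, (k + 2) * 2 ^ k] := fun k hk => by
    rw [hα2, hk, (D4_orbit_eq hβ0 hβ k).1, D4_mulVec, A4_mulVec]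
    simp
    ring
  induction m with
  | zero =>
    have h1 : 2 • α 1 = ![0, 0, 0, 0] := by rw [hα2, hα0, hβ0, D4_mulVec, A4_mulVec]; simp
    exact ⟨by simpa using h1, step 0 (by simpa using h1)⟩
  | succ m ih =>
    have h1 : 2 • α (2 * (m + 1) + 1) = ![0, (m + 1) * 2 ^ (m + 1), 0, 0] := by
      rw [show 2 * (m + 1) + 1 = 2 * m + 2 + 1 by ring, hα2, ih.2, (D4_orbit_eq hβ0 hβ m).2,
        D4_mulVec, A4_mulVec]
      simp
      ring
    exact ⟨h1, step _ h1⟩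

theorem sum_D4_orbit_pos (hβ0 : β 0 = ![1, 0, 0, 0]) (hβ : ∀ n, β (n + 1) = D4 *ᵥ β n)
    (n : ℕ) : 0 < ∑ i, β n i := by
  obtain ⟨m, rfl | rfl⟩ := Nat.even_or_odd' n
  · rcases m with _ | m
    · simp [hβ0, Fin.sum_univ_four]
    · simp [show 2 * (m + 1) = 2 * m + 2 by ring, (D4_orbit_eq hβ0 hβ m).2, Fin.sum_univ_four]
  · simp [(D4_orbit_eq hβ0 hβ m).1, Fin.sum_univ_four]

theorem abs_four_mul_sum_sub_le (hβ0 : β 0 = ![1, 0, 0, 0]) (hβ : ∀ n, β (n + 1) = D4 *ᵥ β n)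
    (hα0 : α 0 = ![0, 0, 0, 0]) (hα : ∀ n, α (n + 1) = D4 *ᵥ α n + A4 *ᵥ β n) (n : ℕ) :
    |4 * ((∑ i, α n i : ℕ) : ℝ) - n * ((∑ i, β n i : ℕ) : ℝ)| ≤ ((∑ i, β n i : ℕ) : ℝ) := by
  suffices 4 * ∑ i, α n i ≤ ∑ i, β n i + n * ∑ i, β n i ∧
      n * ∑ i, β n i ≤ ∑ i, β n i + 4 * ∑ i, α n i by
    rw [abs_sub_le_iff, sub_le_iff_le_add, sub_le_iff_le_add]
    exact_mod_cast this
  have two_mul_sum : ∀ k, 2 * ∑ i, α k i = ∑ i, (2 • α k) i := fun k => by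
    simp [Finset.mul_sum]
  obtain ⟨m, rfl | rfl⟩ := Nat.even_or_odd' n
  · rcases m with _ | m
    · simp [hα0, Fin.sum_univ_four]
    have hb : ∑ i, β (2 * m + 2) i = 2 * 2 ^ m := by
      simp [(D4_orbit_eq hβ0 hβ m).2, Fin.sum_univ_four]
      ring
    have ha : 2 * ∑ i, α (2 * m + 2) i = (2 * m + 2) * 2 ^ m := by
      rw [two_mul_sum, (two_nsmul_accepting_eq hβ0 hβ hα0 hα m).2]
      simp [Fin.sum_univ_four]
      ring
    rw [show 2 * (m + 1) = 2 * m + 2 by ring, hb]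
    constructor <;> linarith [Nat.zero_le (2 ^ m)]
  · have hb : ∑ i, β (2 * m + 1) i = 2 ^ m := by
      simp [(D4_orbit_eq hβ0 hβ m).1, Fin.sum_univ_four]
    have ha : 2 * ∑ i, α (2 * m + 1) i = m * 2 ^ m := by
      rw [two_mul_sum, (two_nsmul_accepting_eq hβ0 hβ hα0 hα m).1]
      simp [Fin.sum_univ_four]
    rw [hb]
    constructor <;> linarith [Nat.zero_le (2 ^ m)]

end

/-- With `β(0) = (1,0,0,0)`, `α(0) = α'(0) = 0`, and the recurrences
`β(n+1) = D·β(n)`, `α(n+1) = D·α(n) + A·β(n)`, `α'(n+1) = D·α'(n) + D·β(n)`,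
setting `a(n) = Σᵢ α(n)(i)` and `a'(n) = Σᵢ α'(n)(i)`, the real sequence
`a(n) / a'(n)` converges to `1/4`. -/
theorem stmt_10 (β α α' : ℕ → Fin 4 → ℕ)
    (hβ0 : β 0 = ![1, 0, 0, 0])
    (hα0 : α 0 = ![0, 0, 0, 0]) (hα'0 : α' 0 = ![0, 0, 0, 0])
    (hβ : ∀ n, β (n + 1) = D4.mulVec (β n))
    (hα : ∀ n, α (n + 1) = D4.mulVec (α n) + A4.mulVec (β n))
    (hα' : ∀ n, α' (n + 1) = D4.mulVec (α' n) + D4.mulVec (β n)) :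
    Tendsto (fun n : ℕ => ((∑ i, α n i : ℕ) : ℝ) / ((∑ i, α' n i : ℕ) : ℝ))
      atTop (nhds (1 / 4)) := by
  have hα'_eq : ∀ n, α' n = n • β n :=
    D4.eq_nsmul_of_mulVec_recurrence (by rw [hα'0]; simp) hβ hα'
  have hsum : ∀ n, ((∑ i, α' n i : ℕ) : ℝ) = n * ((∑ i, β n i : ℕ) : ℝ) := fun n => by
    simp [hα'_eq, Finset.mul_sum]
  simp only [hsum]
  exact tendsto_div_natCast_mul_of_abs_sub_le four_ne_zero
    (fun n => by exact_mod_cast sum_D4_orbit_pos hβ0 hβ n) (abs_four_mul_sum_sub_le hβ0 hβ hα0 hα)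
end
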